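/- Let d > 1 be a real number, n : ℕ, and define u* : Fin (n+1) → ℝ by u* l = (n choose l) · (d−1)^{n−l} · ((d+1)^l − (1−d)^l) / ((2d)^n (d+1)^l). Then for every 0 ≤ k ≤ n: Σ_{l=0}^{n} Q l k · u* l = (if k = 0 then 1 else 0) − (if k = n then ((d−1)/(d+1))^n else 0). -/

import Mathlib

open Matrix Finset
open scoped BigOperators Kronecker ComplexOrder

noncomputable section

/-- The flip (swap) operator on `ℂ^d ⊗ ℂ^d`. -/
def Flip (d : ℕ) : Matrix (Fin d × Fin d) (Fin d × Fin d) ℂ :=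
  Matrix.of fun p q => if p.1 = q.2 ∧ p.2 = q.1 then 1 else 0

/-- Projection onto the symmetric subspace, `Π_s = (1 + F)/2`. -/
def projSym (d : ℕ) : Matrix (Fin d × Fin d) (Fin d × Fin d) ℂ :=
  (2 : ℂ)⁻¹ • (1 + Flip d)

/-- Projection onto the antisymmetric subspace, `Π_a = (1 - F)/2`. -/
def projAsym (d : ℕ) : Matrix (Fin d × Fin d) (Fin d × Fin d) ℂ :=
  (2 : ℂ)⁻¹ • (1 - Flip d)

/-- The symmetric Werner state `σ_d = (2/(d(d+1))) • Π_s`. -/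
def wernerSym (d : ℕ) : Matrix (Fin d × Fin d) (Fin d × Fin d) ℂ :=
  (2 / ((d : ℂ) * ((d : ℂ) + 1))) • projSym d

/-- The antisymmetric Werner state `α_d = (2/(d(d-1))) • Π_a`. -/
def wernerAsym (d : ℕ) : Matrix (Fin d × Fin d) (Fin d × Fin d) ℂ :=
  (2 / ((d : ℂ) * ((d : ℂ) - 1))) • projAsym d

/-- The POVM element `G_d`: diagonal, with `(i,j),(i,j)` entry `1` iff `i ≠ j`. -/
def Gmat (d : ℕ) : Matrix (Fin d × Fin d) (Fin d × Fin d) ℂ :=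
  Matrix.diagonal fun p => if p.1 ≠ p.2 then 1 else 0

/-- `n`-fold tensor power of a matrix on `ℂ^d ⊗ ℂ^d`. -/
def tpow {d : ℕ} (n : ℕ) (X : Matrix (Fin d × Fin d) (Fin d × Fin d) ℂ) :
    Matrix (Fin n → Fin d × Fin d) (Fin n → Fin d × Fin d) ℂ :=
  Matrix.of fun f g => ∏ m, X (f m) (g m)

/-- The twirled single-copy POVM element `M_d = ((d-1)/(d+1)) • Π_s + Π_a`. -/
def MdMat (d : ℕ) : Matrix (Fin d × Fin d) (Fin d × Fin d) ℂ :=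
  (((d : ℂ) - 1) / ((d : ℂ) + 1)) • projSym d + projAsym d

/-- `A_k`: sum over all `k`-element subsets `S` of the copies of the tensor product with
`Π_a` on copies in `S` and `Π_s` elsewhere. -/
def Amat (d n k : ℕ) : Matrix (Fin n → Fin d × Fin d) (Fin n → Fin d × Fin d) ℂ :=
  ∑ S ∈ Finset.powersetCard k (Finset.univ : Finset (Fin n)),
    Matrix.of fun f g => ∏ m, (if m ∈ S then projAsym d else projSym d) (f m) (g m)

/-- Partial transpose on `ℂ^d ⊗ ℂ^d`. -/
def pt {d : ℕ} (X : Matrix (Fin d × Fin d) (Fin d × Fin d) ℂ) :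
    Matrix (Fin d × Fin d) (Fin d × Fin d) ℂ :=
  Matrix.of fun p q => X (p.1, q.2) (q.1, p.2)

/-- The maximally entangled state `Φ_d`. -/
def Phi (d : ℕ) : Matrix (Fin d × Fin d) (Fin d × Fin d) ℂ :=
  Matrix.of fun p q => if p.1 = p.2 ∧ q.1 = q.2 then ((d : ℂ))⁻¹ else 0

/-- `n`-copy partial transpose. -/
def ptN {d n : ℕ} (Y : Matrix (Fin n → Fin d × Fin d) (Fin n → Fin d × Fin d) ℂ) :
    Matrix (Fin n → Fin d × Fin d) (Fin n → Fin d × Fin d) ℂ :=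
  Matrix.of fun f g => Y (fun m => ((f m).1, (g m).2)) (fun m => ((g m).1, (f m).2))

/-- `T_l`: sum over all `l`-element subsets `S` of the copies of the tensor product with
`Φ_d` on copies in `S` and `1 - Φ_d` elsewhere. -/
def Tmat (d n l : ℕ) : Matrix (Fin n → Fin d × Fin d) (Fin n → Fin d × Fin d) ℂ :=
  ∑ S ∈ Finset.powersetCard l (Finset.univ : Finset (Fin n)),
    Matrix.of fun f g => ∏ m, (if m ∈ S then Phi d else (1 - Phi d)) (f m) (g m)

/-- The matrix `Q` of the linear program: `Q l k = Σ_{j=0}^{min(l,k)}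
(n−l choose k−j)(l choose j)(1−d)^j (1+d)^{l−j}`. -/
def Qmat (n : ℕ) (d : ℝ) (l k : ℕ) : ℝ :=
  ∑ j ∈ Finset.range (min l k + 1),
    ((n - l).choose (k - j) : ℝ) * (l.choose j : ℝ) * (1 - d) ^ j * (1 + d) ^ (l - j)

/-- A PPT POVM element on the `n`-copy space: `E`, `1 - E`, `E^Γ`, `(1-E)^Γ` all PSD. -/
def IsPPTPovmElem {d n : ℕ}
    (E : Matrix (Fin n → Fin d × Fin d) (Fin n → Fin d × Fin d) ℂ) : Prop :=
  E.PosSemidef ∧ (1 - E).PosSemidef ∧ (ptN E).PosSemidef ∧ (ptN (1 - E)).PosSemidef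

/-- Error probability for discriminating `σ_d^{⊗n}` (prior `p`) from `α_d^{⊗n}`
(prior `1-p`) with the two-outcome POVM `{E, 1 - E}`. -/
def errProb (d n : ℕ) (p : ℝ)
    (E : Matrix (Fin n → Fin d × Fin d) (Fin n → Fin d × Fin d) ℂ) : ℝ :=
  ((p : ℂ) * (E * tpow n (wernerSym d)).trace
    + (1 - (p : ℂ)) * ((1 - E) * tpow n (wernerAsym d)).trace).re

/-- Separability of a bipartite matrix. -/
def IsSep {I J : Type*} [Fintype I] [Fintype J]
    (W : Matrix (I × J) (I × J) ℂ) : Prop :=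
  ∃ (m : ℕ) (A : Fin m → Matrix I I ℂ) (B : Fin m → Matrix J J ℂ),
    (∀ i, (A i).PosSemidef) ∧ (∀ i, (B i).PosSemidef) ∧ W = ∑ i, A i ⊗ₖ B i

/-- Trace norm `‖X‖₁ = Tr √(Xᴴ X)`. -/
def traceNorm {ι : Type*} [Fintype ι] [DecidableEq ι] (X : Matrix ι ι ℂ) : ℝ :=
  ((Matrix.posSemidef_conjTranspose_mul_self X).1.eigenvectorUnitary.1 *
      Matrix.diagonal ((fun x : ℝ => (x : ℂ)) ∘ Real.sqrt ∘ (Matrix.posSemidef_conjTranspose_mul_self X).1.eigenvalues) *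
      (star (Matrix.posSemidef_conjTranspose_mul_self X).1.eigenvectorUnitary : Matrix ι ι ℂ)).trace.re

/-- Frobenius (Hilbert–Schmidt) norm `‖X‖₂ = √(Tr (Xᴴ X))`. -/
def frobNorm {ι : Type*} [Fintype ι] (X : Matrix ι ι ℂ) : ℝ :=
  Real.sqrt ((Xᴴ * X).trace.re)

/-!
Row `l` of `Q` is the coefficient sequence of `B ^ l * (1 + X) ^ (n - l)` with
`B = (1 + d) + (1 - d) X`. With `A = (d - 1)(1 + X)` and `r = (1 - d)/(1 + d)` one has
`u*_l = (2d)⁻ⁿ (n choose l) (d - 1)^(n - l) (1 - r^l)`, so by the binomial theorem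
`Σ_l u*_l B^l (1 + X)^(n - l) = (2d)⁻ⁿ ((B + A)ⁿ - (r B + A)ⁿ)`. Here `B + A = 2d` is constant
and `r B + A = (2d(d - 1)/(d + 1)) X` is a monomial, which leaves `1 - ((d - 1)/(d + 1))ⁿ Xⁿ`.
-/

namespace Polynomial

variable {R : Type*} [CommSemiring R]

theorem coeff_C_add_C_mul_X_pow (a b : R) (l j : ℕ) :
    ((C a + C b * X) ^ l).coeff j = l.choose j * b ^ j * a ^ (l - j) := by
  have hexpand : (C a + C b * X) ^ l
      = ∑ m ∈ range (l + 1), C (l.choose m * b ^ m * a ^ (l - m)) * X ^ m := by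
    rw [add_comm, add_pow]
    refine sum_congr rfl fun m _ => ?_
    simp only [mul_pow, C_mul, C_pow, ← C_eq_natCast]
    ring
  simp only [hexpand, finsetSum_coeff, coeff_C_mul_X_pow, sum_ite_eq, mem_range]
  split_ifs with hj
  · rfl
  · simp [Nat.choose_eq_zero_of_lt (by omega : l < j)]

end Polynomial

theorem add_pow_sub_mul_add_pow {R : Type*} [CommRing R] (A B c : R) (n : ℕ) :
    (B + A) ^ n - (c * B + A) ^ n
      = ∑ l ∈ range (n + 1), (1 - c ^ l) * B ^ l * A ^ (n - l) * n.choose l := by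
  rw [add_pow, add_pow, ← sum_sub_distrib]
  refine sum_congr rfl fun l _ => ?_
  ring

open Polynomial

def Qpoly (n : ℕ) (d : ℝ) (l : ℕ) : ℝ[X] :=
  (C (1 + d) + C (1 - d) * X) ^ l * (1 + X) ^ (n - l)

theorem Qmat_eq_coeff_Qpoly (n : ℕ) (d : ℝ) (l k : ℕ) :
    Qmat n d l k = (Qpoly n d l).coeff k := by
  have hvanish : ∀ j ∈ range (k + 1), j ∉ range (min l k + 1) →
      ((n - l).choose (k - j) : ℝ) * l.choose j * (1 - d) ^ j * (1 + d) ^ (l - j) = 0 := by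
    intro j hjk hjl
    rw [mem_range] at hjk hjl
    rw [Nat.choose_eq_zero_of_lt (by omega : l < j)]
    simp
  rw [Qpoly, coeff_mul, Nat.sum_antidiagonal_eq_sum_range_succ_mk, Qmat,
    sum_subset (range_subset_range.2 (by omega)) hvanish]
  refine sum_congr rfl fun j _ => ?_
  rw [coeff_C_add_C_mul_X_pow, coeff_one_add_X_pow]
  ring

def uStar (n : ℕ) (d : ℝ) (l : ℕ) : ℝ :=
  n.choose l * (d - 1) ^ (n - l) * ((d + 1) ^ l - (1 - d) ^ l) / ((2 * d) ^ n * (d + 1) ^ l)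

theorem sum_uStar_mul_Qpoly {d : ℝ} (hd : d ≠ 0) (hd' : d + 1 ≠ 0) (n : ℕ) :
    ∑ l ∈ range (n + 1), C (uStar n d l) * Qpoly n d l
      = 1 - C (((d - 1) / (d + 1)) ^ n) * X ^ n := by
  set A : ℝ[X] := C (d - 1) * (1 + X) with hA
  set B : ℝ[X] := C (1 + d) + C (1 - d) * X with hB
  set r : ℝ := (1 - d) / (d + 1) with hr
  set s : ℝ := ((2 * d) ^ n)⁻¹ with hs
  have hterm : ∀ l ∈ range (n + 1), C (uStar n d l) * Qpoly n d l
      = C s * ((1 - C r ^ l) * B ^ l * A ^ (n - l) * n.choose l) := by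
    intro l _
    have hscalar : uStar n d l = s * n.choose l * (d - 1) ^ (n - l) * (1 - r ^ l) := by
      rw [uStar, hs, hr, div_pow]
      field_simp
    rw [Qpoly, ← hB, hA, hscalar]
    simp only [map_mul, map_sub, map_one, map_pow, map_natCast, mul_pow]
    ring
  have hBA : B + A = C (2 * d) := by
    rw [hA, hB]
    simp only [map_add, map_sub, map_mul, map_one, map_ofNat]
    ring
  have hrBA : C r * B + A = C (2 * d * (d - 1) / (d + 1)) * X := by
    have hconst : r * (1 + d) + (d - 1) = 0 := by
      rw [hr]
      field_simp
      ring
    have hlinear : r * (1 - d) + (d - 1) = 2 * d * (d - 1) / (d + 1) := by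
      rw [hr]
      field_simp
      ring
    calc C r * B + A = C (r * (1 + d) + (d - 1)) + C (r * (1 - d) + (d - 1)) * X := by
          rw [hA, hB]
          simp only [map_add, map_mul]
          ring
      _ = C (2 * d * (d - 1) / (d + 1)) * X := by rw [hconst, hlinear, C_0, zero_add]
  have hunit : s * (2 * d) ^ n = 1 := inv_mul_cancel₀ (by positivity)
  have hratio : s * (2 * d * (d - 1) / (d + 1)) ^ n = ((d - 1) / (d + 1)) ^ n := by
    rw [hs, inv_mul_eq_div, ← div_pow]
    congr 1
    field_simp
  calc ∑ l ∈ range (n + 1), C (uStar n d l) * Qpoly n d l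
      = C s * ∑ l ∈ range (n + 1), (1 - C r ^ l) * B ^ l * A ^ (n - l) * n.choose l := by
        rw [mul_sum, sum_congr rfl hterm]
    _ = C s * ((B + A) ^ n - (C r * B + A) ^ n) := by
        rw [add_pow_sub_mul_add_pow]
    _ = 1 - C (((d - 1) / (d + 1)) ^ n) * X ^ n := by
        rw [hBA, hrBA, mul_pow (C _) X, ← C_pow, ← C_pow, mul_sub, ← C_mul, ← mul_assoc, ← C_mul,
          hunit, hratio, C_1]

theorem Qmat_dual_action_general (d : ℝ) (hd : 1 < d) (n : ℕ) (u : Fin (n + 1) → ℝ)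
    (hu : ∀ l : Fin (n + 1),
      u l = (n.choose (l : ℕ) : ℝ) * (d - 1) ^ (n - (l : ℕ))
              * ((d + 1) ^ (l : ℕ) - (1 - d) ^ (l : ℕ))
              / ((2 * d) ^ n * (d + 1) ^ (l : ℕ)))
    (k : ℕ) :
    ∑ l : Fin (n + 1), Qmat n d (l : ℕ) k * u l
      = (if k = 0 then 1 else 0) - (if k = n then ((d - 1) / (d + 1)) ^ n else 0) := by
  have hcoeff : ∑ l : Fin (n + 1), Qmat n d l k * u l
      = (∑ l ∈ range (n + 1), C (uStar n d l) * Qpoly n d l).coeff k := by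
    rw [finsetSum_coeff, ← Fin.sum_univ_eq_sum_range]
    refine sum_congr rfl fun l _ => ?_
    rw [hu, coeff_C_mul, Qmat_eq_coeff_Qpoly, mul_comm, uStar]
  rw [hcoeff, sum_uStar_mul_Qpoly (by positivity) (by positivity), coeff_sub, coeff_one,
    coeff_C_mul_X_pow]

/-- `Σ_l Q l k · u*_l = δ_{0k} − δ_{nk} ((d−1)/(d+1))^n`. -/
theorem Qmat_dual_action (d : ℝ) (hd : 1 < d) (n : ℕ) (u : Fin (n + 1) → ℝ)
    (hu : ∀ l : Fin (n + 1),
      u l = (n.choose (l : ℕ) : ℝ) * (d - 1) ^ (n - (l : ℕ))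
              * ((d + 1) ^ (l : ℕ) - (1 - d) ^ (l : ℕ))
              / ((2 * d) ^ n * (d + 1) ^ (l : ℕ)))
    (k : ℕ) (hk : k ≤ n) :
    ∑ l : Fin (n + 1), Qmat n d (l : ℕ) k * u l
      = (if k = 0 then 1 else 0) - (if k = n then ((d - 1) / (d + 1)) ^ n else 0) :=
  Qmat_dual_action_general d hd n u hu k

end
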